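/- Bin packing with two capacities reduces to uniform-capacity bin packing via fill items: given items a₁,…,a_n, a number of bins k, a capacity B′ ≥ 1, and 0 ≤ r′ ≤ k, the items can be partitioned into r′ bins each of total size at most B′ − 1 and k − r′ bins each of total size at most B′, if and only if the multiset consisting of a₁,…,a_n together with r′ fill items of size B′ + 2 and k − r′ fill items of size B′ + 1 can be partitioned into k bins each of total size at most 2B′ + 1 — provided every item aᵢ satisfies aᵢ ≥ 1 and aᵢ ≤ B′. -/

import Mathlib

/-!
Fill items of size `B' + 1` or `B' + 2` are so large that no two of them fit together in a bin of
capacity `2B' + 1`, so in any packing of the enlarged instance the `k` fill items occupy the `k`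
bins one each. Relabelling the bins along this bijection, the original items left in the bin of
a fill item of size `B' + 2` (resp. `B' + 1`) have total size at most `B' - 1` (resp. `B'`).
-/

open Finset

lemma injective_of_sum_filter_le_of_lt_add {α β : Type*} [Fintype α] [DecidableEq α]
    [DecidableEq β] (Q : α → β) (w : α → ℕ) (C : ℕ)
    (hload : ∀ b, ∑ x ∈ univ.filter (fun x => Q x = b), w x ≤ C)
    (hpair : ∀ x y, x ≠ y → C < w x + w y) :
    Function.Injective Q := by
  intro x y hxy
  by_contra hne
  have hsub : ({x, y} : Finset α) ⊆ univ.filter (fun z => Q z = Q x) := by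
    simp [insert_subset_iff, hxy]
  have hle : w x + w y ≤ C := by
    rw [← sum_pair hne]
    exact (sum_le_sum_of_subset hsub).trans (hload (Q x))
  exact (hpair x y hne).not_ge hle

section FillItems

variable {ι β : Type*} [Fintype ι] [Fintype β] [DecidableEq β]

lemma sum_filter_sum_elim (Q : ι ⊕ β → β) (a : ι → ℕ) (w : β → ℕ) (b : β) :
    ∑ x ∈ univ.filter (fun x => Q x = b), Sum.elim a w x =
      ∑ i ∈ univ.filter (fun i => Q (.inl i) = b), a i +
        ∑ j ∈ univ.filter (fun j => Q (.inr j) = b), w j := by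
  simp only [sum_filter, Fintype.sum_sum_type, Sum.elim_inl, Sum.elim_inr]

theorem exists_packing_iff_exists_packing_with_fill (a : ι → ℕ) (w : β → ℕ) (C : ℕ)
    (hw : ∀ j j', j ≠ j' → C < w j + w j') :
    (∃ P : ι → β, ∀ b, ∑ i ∈ univ.filter (fun i => P i = b), a i + w b ≤ C) ↔
      ∃ Q : ι ⊕ β → β, ∀ b, ∑ x ∈ univ.filter (fun x => Q x = b), Sum.elim a w x ≤ C := by
  constructor
  · rintro ⟨P, hP⟩
    refine ⟨Sum.elim P id, fun b => ?_⟩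
    have hfill : univ.filter (fun j => Sum.elim P id (.inr j) = b) = {b} := by
      ext
      rw [mem_filter]
      simp
    rw [sum_filter_sum_elim, hfill, sum_singleton]
    exact hP b
  · rintro ⟨Q, hQ⟩
    have hinj : Function.Injective (Q ∘ .inr) :=
      injective_of_sum_filter_le_of_lt_add _ w C
        (fun b => le_add_self.trans ((sum_filter_sum_elim Q a w b).symm.trans_le (hQ b))) hw
    let σ : β ≃ β := .ofBijective _ (Finite.injective_iff_bijective.mp hinj)
    refine ⟨fun i => σ.symm (Q (.inl i)), fun b => ?_⟩
    have hfill : univ.filter (fun j => Q (.inr j) = σ b) = {b} := by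
      ext j
      simpa [σ] using hinj.eq_iff (a := j) (b := b)
    simpa [sum_filter_sum_elim, hfill, Equiv.symm_apply_eq] using hQ (σ b)

end FillItems

theorem two_capacity_bin_packing_via_fill_items_general
    (n k B' r' : ℕ) (hB' : 1 ≤ B')
    (a : Fin n → ℕ) :
    (∃ P : Fin n → Fin k, ∀ b : Fin k,
      ((b : ℕ) < r' →
        (∑ i ∈ Finset.univ.filter fun i => P i = b, a i) ≤ B' - 1) ∧
      (r' ≤ (b : ℕ) →
        (∑ i ∈ Finset.univ.filter fun i => P i = b, a i) ≤ B')) ↔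
    (∃ Q : (Fin n ⊕ Fin k) → Fin k, ∀ b : Fin k,
      (∑ x ∈ Finset.univ.filter fun x => Q x = b,
        Sum.elim a (fun j : Fin k => if (j : ℕ) < r' then B' + 2 else B' + 1) x)
        ≤ 2 * B' + 1) := by
  rw [← exists_packing_iff_exists_packing_with_fill]
  · refine exists_congr fun P => forall_congr' fun b => ?_
    split_ifs <;> omega
  · intro j j' _
    split_ifs <;> omega

theorem two_capacity_bin_packing_via_fill_items
    (n k B' r' : ℕ) (hB' : 1 ≤ B') (hr' : r' ≤ k)
    (a : Fin n → ℕ) (ha1 : ∀ i, 1 ≤ a i) (ha2 : ∀ i, a i ≤ B') :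
    (∃ P : Fin n → Fin k, ∀ b : Fin k,
      ((b : ℕ) < r' →
        (∑ i ∈ Finset.univ.filter fun i => P i = b, a i) ≤ B' - 1) ∧
      (r' ≤ (b : ℕ) →
        (∑ i ∈ Finset.univ.filter fun i => P i = b, a i) ≤ B')) ↔
    (∃ Q : (Fin n ⊕ Fin k) → Fin k, ∀ b : Fin k,
      (∑ x ∈ Finset.univ.filter fun x => Q x = b,
        Sum.elim a (fun j : Fin k => if (j : ℕ) < r' then B' + 2 else B' + 1) x)
        ≤ 2 * B' + 1) :=
  two_capacity_bin_packing_via_fill_items_general n k B' r' hB' a
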